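/- Let φ_j be indicator functions of disjoint intervals of width Δx partitioning the torus, φ_j = χ_{[(j-1)Δx - Δx/2, (j-1)Δx + Δx/2]}. Then for shift 2λt = Δx/2, the first row of M(t) with entries ∫ φ_1(x)φ_k(x + 2λt)dx equals (Δx/2)(1,1,0,...,0), and if N is even the resulting circulant matrix M(t) is singular. -/

import Mathlib

/-!
On `[-1, 1]` the `2`-periodized indicator of `[-r, r]` (with `r = Δx / 2 ≤ 1 / 2`) is the plain
indicator of `[-r, r]`, so `c k` is the length of the overlap of two intervals of radius `r`
whose centres are `s = (k - 1) Δx - Δx / 2` apart, i.e. `max (Δx - |s|) 0`. This gives the first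
row `(Δx / 2, Δx / 2, 0, …, 0)`. For `N` even the alternating vector `((-1) ^ k)_k` is an
eigenvector of the circulant matrix with eigenvalue `∑ i, (-1) ^ i c (i + 1) = c 1 - c 2 = 0`.
-/

open MeasureTheory Set

noncomputable def periodizedIndicator (r : ℝ) : ℝ → ℝ :=
  {y : ℝ | ∃ m : ℤ, |y - 2 * m| ≤ r}.indicator fun _ => 1

lemma exists_int_abs_sub_two_mul_le_iff {y r : ℝ} (h : |y| + r < 2) :
    (∃ m : ℤ, |y - 2 * m| ≤ r) ↔ |y| ≤ r := by
  refine ⟨fun ⟨m, hm⟩ => ?_, fun hy => ⟨0, by simpa using hy⟩⟩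
  rcases eq_or_ne m 0 with rfl | hm0
  · simpa using hm
  have h1 : (1 : ℝ) ≤ |(m : ℝ)| := by exact_mod_cast Int.one_le_abs hm0
  have h2 : |2 * (m : ℝ)| - |y| ≤ |y - 2 * m| := by
    simpa [abs_sub_comm] using abs_sub_abs_le_abs_sub (2 * (m : ℝ)) y
  rw [abs_mul, abs_two] at h2
  linarith

lemma periodizedIndicator_eq_indicator_Icc {r y : ℝ} (h : |y| + r < 2) :
    periodizedIndicator r y = (Icc (-r) r).indicator 1 y := by
  have hmem : y ∈ {y : ℝ | ∃ m : ℤ, |y - 2 * m| ≤ r} ↔ y ∈ Icc (-r) r := by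
    rw [mem_ofPred_eq, exists_int_abs_sub_two_mul_le_iff h, mem_Icc, abs_le]
  by_cases hy : y ∈ Icc (-r) r
  · rw [periodizedIndicator, indicator_of_mem (hmem.2 hy), indicator_of_mem hy, Pi.one_apply]
  · rw [periodizedIndicator, indicator_of_notMem (mt hmem.1 hy), indicator_of_notMem hy]

lemma integral_indicator_Icc_one {a b c d : ℝ} (hcd : c ≤ d) (hca : c < a) (hbd : b ≤ d) :
    ∫ x in c..d, (Icc a b).indicator 1 x = max (b - a) 0 := by
  have hsub : Ioc c d ∩ Icc a b = Icc a b := by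
    refine inter_eq_self_of_subset_right fun x hx => ⟨hca.trans_le hx.1, hx.2.trans hbd⟩
  rw [intervalIntegral.integral_of_le hcd, setIntegral_indicator measurableSet_Icc, hsub]
  simp only [Pi.one_apply]
  rw [setIntegral_const, smul_eq_mul, mul_one, measureReal_def, Real.volume_Icc,
    ENNReal.toReal_ofReal']

lemma min_sub_max_eq_sub_abs (r s : ℝ) : min r (r + s) - max (-r) (-r + s) = 2 * r - |s| := by
  rcases le_total 0 s with h | h
  · rw [min_eq_left (by linarith), max_eq_right (by linarith), abs_of_nonneg h]; ring
  · rw [min_eq_right (by linarith), max_eq_left (by linarith), abs_of_nonpos h]; ring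

lemma integral_periodizedIndicator_mul_shift {r s : ℝ} (hr : r < 1) (hs : |s| + 2 * r < 2) :
    ∫ x in (-1 : ℝ)..1, periodizedIndicator r x * periodizedIndicator r (x - s) =
      max (2 * r - |s|) 0 := by
  have heq : EqOn (fun x => periodizedIndicator r x * periodizedIndicator r (x - s))
      ((Icc (-r) r ∩ Icc (-r + s) (r + s)).indicator 1) (uIcc (-1) 1) := by
    intro x hx
    dsimp only
    rw [uIcc_of_le (by norm_num), mem_Icc, ← abs_le] at hx
    rw [inter_indicator_one, Pi.mul_apply,
      periodizedIndicator_eq_indicator_Icc (y := x) (by linarith)]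
    by_cases hxr : x ∈ Icc (-r) r
    · have hxs : |x - s| + r < 2 := by
        have := abs_sub x s
        rw [mem_Icc, ← abs_le] at hxr
        linarith
      simp only [periodizedIndicator_eq_indicator_Icc hxs, indicator_apply, sub_mem_Icc_iff_left,
        Pi.one_apply]
    · simp [indicator_of_notMem hxr]
  rw [intervalIntegral.integral_congr heq, Icc_inter_Icc,
    integral_indicator_Icc_one (by norm_num) (lt_max_of_lt_left (by linarith))
      (min_le_of_left_le hr.le),
    min_sub_max_eq_sub_abs]

lemma integral_periodizedIndicator_mul_shift_grid {N k : ℕ} {Δx : ℝ} (hN : 2 ≤ N)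
    (hNΔx : N * Δx = 2) (hk1 : 1 ≤ k) (hkN : k ≤ N) :
    ∫ x in (-1 : ℝ)..1, periodizedIndicator (Δx / 2) x *
        periodizedIndicator (Δx / 2) (x - ((k - 1) * Δx - Δx / 2)) =
      max (Δx - |(k - 1) * Δx - Δx / 2|) 0 := by
  have hN' : (2 : ℝ) ≤ N := by exact_mod_cast hN
  have hΔx_pos : 0 < Δx := by nlinarith
  have hkΔx : k * Δx ≤ N * Δx := mul_le_mul_of_nonneg_right (by exact_mod_cast hkN) hΔx_pos.le
  have hk1' : (1 : ℝ) ≤ k := by exact_mod_cast hk1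
  have hs : |(k - 1) * Δx - Δx / 2| < 2 - Δx := abs_lt.mpr ⟨by nlinarith, by nlinarith⟩
  rw [integral_periodizedIndicator_mul_shift (by nlinarith) (by linarith),
    mul_div_cancel₀ _ two_ne_zero]

section

open Finset Matrix

lemma neg_one_pow_val_add {R : Type*} [Ring R] {N : ℕ} (hN : Even N) (i j : Fin N) :
    (-1 : R) ^ ((i + j : Fin N) : ℕ) = (-1) ^ (i : ℕ) * (-1) ^ (j : ℕ) := by
  rw [Fin.val_add, neg_one_pow_eq_pow_mod_two, Nat.mod_mod_of_dvd _ hN.two_dvd,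
    ← neg_one_pow_eq_pow_mod_two, pow_add]

lemma mulVec_neg_one_pow_of_apply_eq_sub {R : Type*} [CommRing R] {N : ℕ} [NeZero N] (hN : Even N)
    (c : ℕ → R) (C : Matrix (Fin N) (Fin N) R)
    (hC : ∀ j k : Fin N, C j k = c (((k - j : Fin N) : ℕ) + 1)) :
    C *ᵥ (fun k : Fin N => (-1 : R) ^ (k : ℕ)) =
      (∑ i ∈ range N, (-1) ^ i * c (i + 1)) • fun k : Fin N => (-1 : R) ^ (k : ℕ) := by
  ext j
  simp only [mulVec, dotProduct, hC, Pi.smul_apply, smul_eq_mul]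
  rw [← Equiv.sum_comp (Equiv.addRight j), ← Fin.sum_univ_eq_sum_range, sum_mul]
  refine sum_congr rfl fun i _ => ?_
  rw [Equiv.coe_addRight, add_sub_cancel_right, neg_one_pow_val_add hN]
  ring

lemma sum_range_neg_one_pow_mul_eq_zero {R : Type*} [CommRing R] {N : ℕ} (hN : 2 ≤ N)
    (c : ℕ → R) (h12 : c 1 = c 2) (hc : ∀ k, 3 ≤ k → k ≤ N → c k = 0) :
    ∑ i ∈ range N, (-1) ^ i * c (i + 1) = 0 := by
  obtain ⟨n, rfl⟩ := Nat.exists_eq_add_of_le' hN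
  rw [sum_range_succ', sum_range_succ', sum_eq_zero fun i hi => ?_]
  · simp [h12]
  · rw [hc _ (by omega) (by simp at hi; omega), mul_zero]

lemma Matrix.det_eq_zero_of_apply_eq_sub {K : Type*} [Field K] {N : ℕ} [NeZero N] (hN : Even N)
    (c : ℕ → K) (C : Matrix (Fin N) (Fin N) K)
    (hC : ∀ j k : Fin N, C j k = c (((k - j : Fin N) : ℕ) + 1))
    (hc : ∑ i ∈ range N, (-1) ^ i * c (i + 1) = 0) : C.det = 0 := by
  refine exists_mulVec_eq_zero_iff.mp ⟨fun k => (-1) ^ (k : ℕ), fun h => ?_, ?_⟩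
  · simpa using congrFun h 0
  · rw [mulVec_neg_one_pow_of_apply_eq_sub hN c C hC, hc, zero_smul]

end

/-- for the periodized indicator basis
`φ_j = χ_{[(j-1)Δx - Δx/2, (j-1)Δx + Δx/2]}` on the torus `[-1,1]` with
`Δx = 2/N`, the first row of `M(t)` at shift `2λt = Δx/2` equals
`(Δx/2)(1,1,0,…,0)`, and for `N` even the corresponding circulant matrix is
singular. -/
theorem indicator_basis_half_shift_singular (N : ℕ) (hN : 2 ≤ N) [NeZero N]
    (hNeven : Even N) (Δx : ℝ) (hΔx : Δx = 2 / N) (φ₀ : ℝ → ℝ)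
    (hφ₀ : ∀ x : ℝ, φ₀ x = Set.indicator {y : ℝ | ∃ m : ℤ, |y - 2 * m| ≤ Δx / 2} (fun _ => 1) x)
    (φ : ℕ → ℝ → ℝ) (hφ : ∀ j x, φ j x = φ₀ (x - ((j : ℝ) - 1) * Δx))
    (c : ℕ → ℝ)
    (hc : ∀ k, c k = ∫ x in (-1 : ℝ)..1, φ 1 x * φ k (x + Δx / 2))
    (C : Matrix (Fin N) (Fin N) ℝ)
    (hC : ∀ j k : Fin N, C j k = c (((k - j : Fin N) : ℕ) + 1)) :
    c 1 = Δx / 2 ∧ c 2 = Δx / 2 ∧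
    (∀ k, 3 ≤ k → k ≤ N → c k = 0) ∧ C.det = 0 := by
  have hNΔx : N * Δx = 2 := by rw [hΔx]; field_simp
  have hΔx_pos : 0 < Δx := by rw [hΔx]; positivity
  have hφ₀' : φ₀ = periodizedIndicator (Δx / 2) := funext hφ₀
  have hc_eq : ∀ k : ℕ, 1 ≤ k → k ≤ N →
      c k = max (Δx - |(k - 1) * Δx - Δx / 2|) 0 := by
    intro k hk1 hkN
    rw [hc, ← integral_periodizedIndicator_mul_shift_grid hN hNΔx hk1 hkN]
    refine intervalIntegral.integral_congr fun x _ => ?_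
    simp only [hφ, hφ₀', Nat.cast_one, sub_self, zero_mul, sub_zero]
    rw [show x + Δx / 2 - ((k : ℝ) - 1) * Δx = x - ((k - 1) * Δx - Δx / 2) by ring]
  have hc₁ : c 1 = Δx / 2 := by
    rw [hc_eq 1 le_rfl (by omega), Nat.cast_one, sub_self, zero_mul, zero_sub, abs_neg,
      abs_of_pos (half_pos hΔx_pos), sub_half]
    exact max_eq_left (half_pos hΔx_pos).le
  have hc₂ : c 2 = Δx / 2 := by
    rw [hc_eq 2 (by norm_num) hN,
      show ((2 : ℕ) - 1 : ℝ) * Δx - Δx / 2 = Δx / 2 by norm_num; ring,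
      abs_of_pos (half_pos hΔx_pos), sub_half]
    exact max_eq_left (half_pos hΔx_pos).le
  have hc₀ : ∀ k, 3 ≤ k → k ≤ N → c k = 0 := by
    intro k hk3 hkN
    have hk3' : (3 : ℝ) ≤ k := by exact_mod_cast hk3
    rw [hc_eq k (by omega) hkN, abs_of_pos (by nlinarith)]
    exact max_eq_right (by nlinarith)
  exact ⟨hc₁, hc₂, hc₀, Matrix.det_eq_zero_of_apply_eq_sub hNeven c C hC
    (sum_range_neg_one_pow_mul_eq_zero hN c (hc₁.trans hc₂.symm) hc₀)⟩
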